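/- Main concentration lemma: Let Z_1, ..., Z_s be random variables with |Z_j| ≤ A a.s. and Var[Z_j | Z_1,...,Z_{j-1}] ≤ B·E[Z_j | Z_1,...,Z_{j-1}] + C a.s., where 4A ≤ B ≤ 1, C > 0. Then for any q ≥ max(2sC/B, 16B), P[∑_j Z_j < -q] ≤ 3 e^{-q/(16B)}. -/

import Mathlib

open MeasureTheory

/-!
With `t = 1 / (4B)`, write `M` and `V` for the conditional mean and variance of `Z_j` given the
past. Since `|t (Z_j - M)| ≤ 1`, the bound `eˣ ≤ 1 + x + x²` gives
`E[e^{-t Z_j} | past] ≤ e^{-t M + t² V} ≤ e^{-t M + t² (B M + C)}`, and `0 ≤ V ≤ B M + C` forces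
`M ≥ -C/B`, so this exponent is at most `t C / B`. Peeling off one factor at a time,
`E[e^{-t ∑ Z_j}] ≤ e^{s t C / B}`, and the Chernoff bound with `2 s C / B ≤ q` gives
`P[∑ Z_j < -q] ≤ e^{-q/(8B)}`.
-/

open ProbabilityTheory Real Finset

section

variable {Ω : Type*} {m m0 : MeasurableSpace Ω} {μ : Measure Ω}

lemma neg_mul_add_sq_mul_le {t B C M V : ℝ} (hB : 0 < B) (ht : 0 ≤ t) (htB : t * B ≤ 1)
    (hV0 : 0 ≤ V) (hV : V ≤ B * M + C) : -t * M + t ^ 2 * V ≤ t * C / B := by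
  rw [le_div_iff₀ hB]
  nlinarith [mul_le_mul_of_nonneg_left hV (by positivity : 0 ≤ t ^ 2 * B),
    mul_nonneg (mul_nonneg ht (sub_nonneg.2 htB)) (hV0.trans hV)]

lemma ae_norm_prod_le_pow {ι : Type*} {Y : ι → Ω → ℝ} {K : ℝ} (s : Finset ι)
    (hY0 : ∀ j ω, 0 ≤ Y j ω) (hYK : ∀ j ∈ s, ∀ᵐ ω ∂μ, Y j ω ≤ K) :
    ∀ᵐ ω ∂μ, ‖∏ j ∈ s, Y j ω‖ ≤ K ^ s.card := by
  filter_upwards [(Filter.eventually_all_finset s).2 hYK] with ω h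
  rw [norm_of_nonneg (prod_nonneg fun j _ => hY0 j ω)]
  exact (prod_le_prod (fun j _ => hY0 j ω) h).trans_eq (prod_const K)

variable [IsFiniteMeasure μ]

lemma integrable_exp_of_ae_le {f : Ω → ℝ} {c : ℝ} (hf : AEStronglyMeasurable f μ)
    (hfc : ∀ᵐ ω ∂μ, f ω ≤ c) : Integrable (fun ω => exp (f ω)) μ :=
  .of_bound (continuous_exp.comp_aestronglyMeasurable hf) (exp c) <| by
    filter_upwards [hfc] with ω h
    rw [norm_of_nonneg (exp_pos _).le]
    exact exp_le_exp.mpr h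

lemma integral_mul_condExp (hm : m ≤ m0) {f g : Ω → ℝ} {c : ℝ} (hf : StronglyMeasurable[m] f)
    (hfc : ∀ᵐ ω ∂μ, ‖f ω‖ ≤ c) (hg : Integrable g μ) :
    ∫ ω, f ω * μ[g|m] ω ∂μ = ∫ ω, f ω * g ω ∂μ :=
  (integral_congr_ae (condExp_stronglyMeasurable_mul_of_bound hm hf hg c hfc).symm).trans
    (integral_condExp hm)

lemma condExp_exp_mul_le (hm : m ≤ m0) {U : Ω → ℝ} {t : ℝ} (hU : MemLp U 2 μ)
    (htU : ∀ᵐ ω ∂μ, |t * U ω| ≤ 1) (hU0 : μ[U|m] =ᵐ[μ] 0) :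
    μ[fun ω => exp (t * U ω)|m] ≤ᵐ[μ] fun ω => 1 + t ^ 2 * μ[fun ω => U ω ^ 2|m] ω := by
  have hUi : Integrable U μ := hU.integrable one_le_two
  have hU2i : Integrable (fun ω => U ω ^ 2) μ := hU.integrable_sq
  have hquad_i : Integrable ((fun _ => (1 : ℝ)) + t • U + t ^ 2 • fun ω => U ω ^ 2) μ :=
    ((integrable_const 1).add (hUi.smul t)).add (hU2i.smul _)
  have hexp_le : (fun ω => exp (t * U ω)) ≤ᵐ[μ]
      (fun _ => (1 : ℝ)) + t • U + t ^ 2 • fun ω => U ω ^ 2 := by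
    filter_upwards [htU] with ω h
    have := (abs_le.1 (abs_exp_sub_one_sub_id_le h)).2
    simp only [Pi.add_apply, Pi.smul_apply, smul_eq_mul]
    linarith
  have hexp_i : Integrable (fun ω => exp (t * U ω)) μ :=
    integrable_exp_of_ae_le (hU.1.const_mul t) (htU.mono fun ω h => (le_abs_self _).trans h)
  filter_upwards [condExp_mono hexp_i hquad_i hexp_le,
    condExp_add ((integrable_const 1).add (hUi.smul t)) (hU2i.smul (t ^ 2)) m,
    condExp_add (integrable_const 1) (hUi.smul t) m, condExp_smul t U m,
    condExp_smul (t ^ 2) (fun ω => U ω ^ 2) m, hU0] with ω h h₁ h₂ h₃ h₄ h₀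
  simp only [Pi.add_apply, Pi.smul_apply, smul_eq_mul, Pi.zero_apply] at h h₁ h₂ h₃ h₄ h₀
  rw [h₁, h₂, h₃, h₄, h₀, condExp_const hm] at h
  simpa using h

lemma condExp_exp_neg_mul_le (hm : m ≤ m0) {Z : Ω → ℝ} {A B C t : ℝ}
    (hZ : AEStronglyMeasurable Z μ) (hZA : ∀ᵐ ω ∂μ, |Z ω| ≤ A)
    (hvar : ∀ᵐ ω ∂μ, μ[fun ω' => (Z ω' - μ[Z|m] ω') ^ 2|m] ω ≤ B * μ[Z|m] ω + C)
    (hB : 0 < B) (ht : 0 ≤ t) (htB : t * B ≤ 1) (htA : 2 * t * A ≤ 1) :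
    μ[fun ω => exp (-t * Z ω)|m] ≤ᵐ[μ] fun _ => exp (t * C / B) := by
  set M := μ[Z|m]
  have hZi : Integrable Z μ := .of_bound hZ A hZA
  have hMA : ∀ᵐ ω ∂μ, |M ω| ≤ A := ae_bdd_abs_condExp_of_ae_bdd_abs hZA
  have hM : StronglyMeasurable[m] M := stronglyMeasurable_condExp
  have hU0 : μ[Z - M|m] =ᵐ[μ] 0 := by
    filter_upwards [condExp_sub hZi integrable_condExp m] with ω h
    rw [h, condExp_of_stronglyMeasurable hm hM integrable_condExp, Pi.sub_apply, sub_self,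
      Pi.zero_apply]
  have hUA : ∀ᵐ ω ∂μ, |(Z - M) ω| ≤ 2 * A := by
    filter_upwards [hZA, hMA] with ω h₁ h₂
    exact (abs_sub _ _).trans (by linarith)
  have hU : MemLp (Z - M) 2 μ := .of_bound (hZ.sub (hM.mono hm).aestronglyMeasurable) _ hUA
  have htU : ∀ᵐ ω ∂μ, |-t * (Z - M) ω| ≤ 1 := by
    filter_upwards [hUA] with ω h
    rw [abs_mul, abs_neg, abs_of_nonneg ht]
    nlinarith
  have hmgf := condExp_exp_mul_le hm hU htU hU0
  have hpull : μ[fun ω => exp (-t * Z ω)|m] =ᵐ[μ]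
      fun ω => exp (-t * M ω) * μ[fun ω => exp (-t * (Z - M) ω)|m] ω := by
    have hsplit : (fun ω => exp (-t * Z ω))
        = (fun ω => exp (-t * M ω)) * fun ω => exp (-t * (Z - M) ω) := by
      ext ω; rw [Pi.mul_apply, ← exp_add, Pi.sub_apply]; ring_nf
    rw [hsplit]
    refine condExp_stronglyMeasurable_mul_of_bound hm
      (continuous_exp.comp_stronglyMeasurable (hM.const_mul _)) ?_ (exp (t * A)) ?_
    · exact integrable_exp_of_ae_le (hU.1.const_mul _) (c := 1) <| by
        filter_upwards [hUA] with ω h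
        nlinarith [neg_abs_le ((Z - M) ω)]
    · filter_upwards [hMA] with ω h
      rw [norm_of_nonneg (exp_pos _).le, exp_le_exp]
      nlinarith [neg_abs_le (M ω)]
  have hV0 : 0 ≤ᵐ[μ] μ[fun ω' => (Z ω' - M ω') ^ 2|m] :=
    condExp_nonneg (.of_forall fun ω => sq_nonneg _)
  filter_upwards [hpull, hmgf, hvar, hV0] with ω h₁ h₂ h₃ h₄
  rw [h₁]
  calc exp (-t * M ω) * μ[fun ω => exp (-t * (Z - M) ω)|m] ω
      ≤ exp (-t * M ω) * exp (t ^ 2 * μ[fun ω' => (Z ω' - M ω') ^ 2|m] ω) := by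
        gcongr
        refine h₂.trans ?_
        rw [neg_sq, add_comm]
        exact add_one_le_exp _
    _ ≤ exp (t * C / B) := by
        rw [← exp_add, exp_le_exp]
        exact neg_mul_add_sq_mul_le hB ht htB h₄ h₃

lemma integrable_prod_of_ae_le {ι : Type*} {Y : ι → Ω → ℝ} {K : ℝ} (s : Finset ι)
    (hY : ∀ j ∈ s, AEStronglyMeasurable (Y j) μ) (hY0 : ∀ j ω, 0 ≤ Y j ω)
    (hYK : ∀ j ∈ s, ∀ᵐ ω ∂μ, Y j ω ≤ K) : Integrable (fun ω => ∏ j ∈ s, Y j ω) μ :=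
  .of_bound (Finset.aestronglyMeasurable_fun_prod s hY) _ (ae_norm_prod_le_pow s hY0 hYK)

end

section

variable {Ω : Type*} {m0 : MeasurableSpace Ω} {μ : Measure Ω} [IsProbabilityMeasure μ]

lemma integral_prod_le_pow {ℱ : Filtration ℕ m0} {Y : ℕ → Ω → ℝ}
    {c K : ℝ} (n : ℕ) (hY : StronglyAdapted ℱ Y) (hY0 : ∀ j ω, 0 ≤ Y j ω)
    (hYK : ∀ j ∈ Icc 1 n, ∀ᵐ ω ∂μ, Y j ω ≤ K) (hc : 0 ≤ c)
    (hYc : ∀ j ∈ Icc 1 n, μ[Y j|ℱ (j - 1)] ≤ᵐ[μ] fun _ => c) :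
    ∫ ω, ∏ j ∈ Icc 1 n, Y j ω ∂μ ≤ c ^ n := by
  induction n with
  | zero => simp
  | succ n ih =>
    have hsub : Icc 1 n ⊆ Icc 1 (n + 1) := Icc_subset_Icc_right n.le_succ
    have hmem : n + 1 ∈ Icc 1 (n + 1) := by simp
    set P := fun ω => ∏ j ∈ Icc 1 n, Y j ω
    have hP : StronglyMeasurable[ℱ n] P :=
      Finset.stronglyMeasurable_fun_prod _ fun j hj =>
        (hY j).mono (ℱ.mono (mem_Icc.1 hj).2)
    have hPK : ∀ᵐ ω ∂μ, ‖P ω‖ ≤ K ^ n := by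
      simpa only [Nat.card_Icc, add_tsub_cancel_right] using
        ae_norm_prod_le_pow _ hY0 fun j hj => hYK j (hsub hj)
    have hYi : Integrable (Y (n + 1)) μ :=
        .of_bound ((hY _).mono (ℱ.le _)).aestronglyMeasurable K <| by
      filter_upwards [hYK _ hmem] with ω h
      rwa [norm_of_nonneg (hY0 _ ω)]
    have hPi : Integrable P μ := integrable_prod_of_ae_le _
      (fun j _ => ((hY j).mono (ℱ.le j)).aestronglyMeasurable) hY0 fun j hj => hYK j (hsub hj)
    calc ∫ ω, ∏ j ∈ Icc 1 (n + 1), Y j ω ∂μ = ∫ ω, P ω * Y (n + 1) ω ∂μ := by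
          simp_rw [prod_Icc_succ_top (by omega : 1 ≤ n + 1)]; rfl
      _ = ∫ ω, P ω * μ[Y (n + 1)|ℱ n] ω ∂μ := (integral_mul_condExp (ℱ.le n) hP hPK hYi).symm
      _ ≤ ∫ ω, P ω * c ∂μ := by
          refine integral_mono_ae (integrable_condExp.bdd_mul
            (hP.mono (ℱ.le n)).aestronglyMeasurable hPK) (hPi.mul_const c) ?_
          filter_upwards [hYc _ hmem] with ω h
          exact mul_le_mul_of_nonneg_left h (prod_nonneg fun j _ => hY0 j ω)
      _ = (∫ ω, P ω ∂μ) * c := integral_mul_const c P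
      _ ≤ c ^ n * c := by
          gcongr
          exact ih (fun j hj => hYK j (hsub hj)) fun j hj => hYc j (hsub hj)
      _ = c ^ (n + 1) := (pow_succ c n).symm

theorem measureReal_sum_lt_neg_le (ℱ : Filtration ℕ m0) {Z : ℕ → Ω → ℝ} {A B C t : ℝ}
    (s : ℕ) (q : ℝ) (hadapt : StronglyAdapted ℱ Z) (hbdd : ∀ j ∈ Icc 1 s, ∀ᵐ ω ∂μ, |Z j ω| ≤ A)
    (hvar : ∀ j ∈ Icc 1 s, ∀ᵐ ω ∂μ,
      μ[fun ω' => (Z j ω' - μ[Z j|ℱ (j - 1)] ω') ^ 2|ℱ (j - 1)] ω ≤ B * μ[Z j|ℱ (j - 1)] ω + C)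
    (hB : 0 < B) (ht : 0 ≤ t) (htB : t * B ≤ 1) (htA : 2 * t * A ≤ 1) :
    μ.real {ω | ∑ j ∈ Icc 1 s, Z j ω < -q} ≤ exp (s * (t * C / B) - t * q) := by
  set Y : ℕ → Ω → ℝ := fun j ω => exp (-t * Z j ω)
  have hY : StronglyAdapted ℱ Y := fun j =>
    continuous_exp.comp_stronglyMeasurable ((hadapt j).const_mul _)
  have hY0 : ∀ j ω, 0 ≤ Y j ω := fun j ω => (exp_pos _).le
  have hYK : ∀ j ∈ Icc 1 s, ∀ᵐ ω ∂μ, Y j ω ≤ exp (t * A) := fun j hj => by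
    filter_upwards [hbdd j hj] with ω h
    exact exp_le_exp.2 (by nlinarith [neg_abs_le (Z j ω)])
  have hYc : ∀ j ∈ Icc 1 s, μ[Y j|ℱ (j - 1)] ≤ᵐ[μ] fun _ => exp (t * C / B) := fun j hj =>
    condExp_exp_neg_mul_le (ℱ.le _) ((hadapt j).mono (ℱ.le j)).aestronglyMeasurable (hbdd j hj)
      (hvar j hj) hB ht htB htA
  have hprod : ∀ ω, exp (t * -∑ j ∈ Icc 1 s, Z j ω) = ∏ j ∈ Icc 1 s, Y j ω := fun ω => by
    rw [← exp_sum, mul_neg, mul_sum, ← sum_neg_distrib]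
    simp only [neg_mul]
  have hint : Integrable (fun ω => exp (t * -∑ j ∈ Icc 1 s, Z j ω)) μ := by
    simpa only [hprod] using integrable_prod_of_ae_le _
      (fun j _ => ((hY j).mono (ℱ.le j)).aestronglyMeasurable) hY0 hYK
  have hmgf : mgf (fun ω => -∑ j ∈ Icc 1 s, Z j ω) μ t ≤ exp (t * C / B) ^ s := by
    simpa only [mgf, hprod] using integral_prod_le_pow s hY hY0 hYK (exp_pos _).le hYc
  calc μ.real {ω | ∑ j ∈ Icc 1 s, Z j ω < -q} ≤ μ.real {ω | q ≤ -∑ j ∈ Icc 1 s, Z j ω} :=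
        measureReal_mono fun _ h => show q ≤ _ from le_neg_of_le_neg (le_of_lt h)
    _ ≤ exp (-t * q) * exp (t * C / B) ^ s :=
        (measure_ge_le_exp_mul_mgf q ht hint).trans (by gcongr)
    _ = exp (s * (t * C / B) - t * q) := by rw [← exp_nat_mul, ← exp_add]; ring_nf

end

theorem stmt_10_general {Ω : Type*} {m0 : MeasurableSpace Ω} (μ : Measure Ω)
    [IsProbabilityMeasure μ] (ℱ : Filtration ℕ m0)
    (s : ℕ) (Z : ℕ → Ω → ℝ) (A B C q : ℝ)
    (hadapt : ∀ j, StronglyMeasurable[ℱ j] (Z j))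
    (hbdd : ∀ j ∈ Finset.Icc 1 s, ∀ᵐ ω ∂μ, |Z j ω| ≤ A)
    (hvar : ∀ j ∈ Finset.Icc 1 s, ∀ᵐ ω ∂μ,
      (μ[fun ω' => (Z j ω' - (μ[Z j | ℱ (j-1)]) ω')^2 | ℱ (j-1)]) ω
        ≤ B * (μ[Z j | ℱ (j-1)]) ω + C)
    (hA : 0 < A) (hAB : 4*A ≤ B)
    (hq : max (2*(s:ℝ)*C/B) (16*B) ≤ q) :
    μ {ω | (∑ j ∈ Finset.Icc 1 s, Z j ω) < -q}
      ≤ ENNReal.ofReal (3 * Real.exp (-q/(16*B))) := by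
  have hB : 0 < B := by linarith
  obtain ⟨hsC, hBq⟩ := max_le_iff.1 hq
  have htail := measureReal_sum_lt_neg_le ℱ s q hadapt hbdd hvar hB (t := 1 / (4 * B))
    (by positivity) (by field_simp; norm_num) (by field_simp; linarith)
  have hexponent : s * (1 / (4 * B) * C / B) - 1 / (4 * B) * q ≤ -q / (16 * B) := by
    rw [div_le_iff₀ hB] at hsC
    field_simp
    nlinarith
  rw [ENNReal.le_ofReal_iff_toReal_le (measure_ne_top _ _) (by positivity)]
  calc μ.real {ω | ∑ j ∈ Icc 1 s, Z j ω < -q} ≤ exp (-q / (16 * B)) :=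
        htail.trans (exp_le_exp.2 hexponent)
    _ ≤ 3 * exp (-q / (16 * B)) := by linarith [exp_pos (-q / (16 * B))]

theorem stmt_10 {Ω : Type*} {m0 : MeasurableSpace Ω} (μ : Measure Ω)
    [IsProbabilityMeasure μ] (ℱ : Filtration ℕ m0)
    (s : ℕ) (Z : ℕ → Ω → ℝ) (A B C q : ℝ)
    (hadapt : ∀ j, StronglyMeasurable[ℱ j] (Z j))
    (hbdd : ∀ j ∈ Finset.Icc 1 s, ∀ᵐ ω ∂μ, |Z j ω| ≤ A)
    (hvar : ∀ j ∈ Finset.Icc 1 s, ∀ᵐ ω ∂μ,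
      (μ[fun ω' => (Z j ω' - (μ[Z j | ℱ (j-1)]) ω')^2 | ℱ (j-1)]) ω
        ≤ B * (μ[Z j | ℱ (j-1)]) ω + C)
    (hA : 0 < A) (hAB : 4*A ≤ B) (hB1 : B ≤ 1) (hC : 0 < C)
    (hq : max (2*(s:ℝ)*C/B) (16*B) ≤ q) :
    μ {ω | (∑ j ∈ Finset.Icc 1 s, Z j ω) < -q}
      ≤ ENNReal.ofReal (3 * Real.exp (-q/(16*B))) :=
  stmt_10_general μ ℱ s Z A B C q hadapt hbdd hvar hA hAB hq
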